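/- For a compact Hausdorff space X, the following are equivalent: (1) X is metrizable; (2) X is second-countable; (3) X is nonempty implies X is a continuous image of Cantor's ternary set (or X is empty). -/

import Mathlib

/-- Cantor's ternary set `C = { Σ_{n ≥ 1} ω_n / 3^n : ω_n ∈ {0, 2} }`, as a subset of `ℝ`
with the Euclidean (subspace) topology. -/
def cantorC : Set ℝ :=
  {x | ∃ ω : ℕ → ℝ, (∀ n, ω n = 0 ∨ ω n = 2) ∧ HasSum (fun n => ω n / 3 ^ (n + 1)) x}

/-!
Compact Hausdorff spaces are metrizable exactly when they are second countable (Urysohn).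
A nonempty compact metric space is a continuous image of `ℕ → Bool ≃ₜ C` (Hausdorff–Alexandroff).
Conversely, a continuous surjection `f` from the compact second-countable `C` onto a Hausdorff
space is a closed map with compact fibres, so the sets `X \ f (C \ U)`, with `U` running over
finite unions of basic open sets of `C`, form a countable basis of `X`.
-/

open Set Function TopologicalSpace Real

theorem TopologicalSpace.IsTopologicalBasis.exists_finite_sUnion_between {C : Type*}
    [TopologicalSpace C] {B : Set (Set C)} (hB : IsTopologicalBasis B) {K U : Set C}
    (hK : IsCompact K) (hU : IsOpen U) (hKU : K ⊆ U) :
    ∃ t ⊆ B, t.Finite ∧ K ⊆ ⋃₀ t ∧ ⋃₀ t ⊆ U := by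
  rw [hB.open_eq_sUnion' hU, sUnion_eq_biUnion] at hKU
  obtain ⟨t, htB, htf, hKt⟩ := hK.elim_finite_subcover_image (fun V hV ↦ hB.isOpen hV.1) hKU
  exact ⟨t, fun V hV ↦ (htB hV).1, htf, by rwa [sUnion_eq_biUnion],
    sUnion_subset fun V hV ↦ (htB hV).2⟩

theorem IsProperMap.secondCountableTopology {C X : Type*} [TopologicalSpace C]
    [TopologicalSpace X] [SecondCountableTopology C] {f : C → X} (hf : IsProperMap f)
    (hsurj : Surjective f) : SecondCountableTopology X := by
  obtain ⟨B, hBc, -, hB⟩ := exists_countable_basis C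
  -- `(f '' Uᶜ)ᶜ` is the largest set whose preimage lies in `U`; it is open as `f` is closed.
  let V (t : Set (Set C)) : Set X := (f '' (⋃₀ t)ᶜ)ᶜ
  refine (isTopologicalBasis_of_isOpen_of_nhds (s := V '' {t | t.Finite ∧ t ⊆ B}) ?_ ?_)
    |>.secondCountableTopology ((countable_ofPred_finite_subset hBc).image V)
  · rintro _ ⟨t, ⟨-, htB⟩, rfl⟩
    have hopen : IsOpen (⋃₀ t) := isOpen_sUnion fun U hU ↦ hB.isOpen (htB hU)
    exact (hf.isClosedMap _ hopen.isClosed_compl).isOpen_compl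
  · intro x W hxW hW
    obtain ⟨t, htB, htf, hxt, htW⟩ := hB.exists_finite_sUnion_between
      (hf.isCompact_preimage (isCompact_singleton (x := x))) (hW.preimage hf.continuous)
      (preimage_mono (singleton_subset_iff.2 hxW))
    refine ⟨V t, ⟨t, ⟨htf, htB⟩, rfl⟩, ?_, fun y hy ↦ ?_⟩
    · rintro ⟨c, hc, rfl⟩
      exact hc (hxt (mem_singleton _))
    · obtain ⟨c, rfl⟩ := hsurj y
      by_contra hcW
      exact hy ⟨c, fun hc ↦ hcW (htW hc), rfl⟩

theorem mem_cantorC_iff {x : ℝ} :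
    x ∈ cantorC ↔ ∃ y : ℕ → Bool, ofDigits (fun i ↦ cond (y i) 2 0 : ℕ → Fin 3) = x := by
  have hterm (y : ℕ → Bool) (n : ℕ) : ofDigitsTerm (fun i ↦ cond (y i) 2 0 : ℕ → Fin 3) n =
      (cond (y n) 2 0 : ℝ) / 3 ^ (n + 1) := by
    cases h : y n <;> simp [ofDigitsTerm, div_eq_mul_inv, h]
  constructor
  · rintro ⟨ω, hω, hsum⟩
    refine ⟨fun n ↦ decide (ω n = 2), (hsum.unique ?_).symm⟩
    refine summable_ofDigitsTerm.hasSum.congr_fun fun n ↦ ?_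
    rw [hterm]
    rcases hω n with h | h <;> simp [h]
  · rintro ⟨y, rfl⟩
    refine ⟨fun n ↦ cond (y n) 2 0, fun n ↦ by cases h : y n <;> simp [h], ?_⟩
    exact summable_ofDigitsTerm.hasSum.congr_fun fun n ↦ (hterm y n).symm

theorem cantorC_eq_cantorSet : cantorC = cantorSet := by
  ext x
  rw [mem_cantorC_iff]
  refine ⟨fun ⟨y, hy⟩ ↦ hy ▸ ofDigits_bool_to_fin_three_mem_cantorSet y, fun hx ↦ ?_⟩
  exact ⟨_, congrArg Subtype.val (cantorSetEquivNatToBool.symm_apply_apply ⟨x, hx⟩)⟩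

noncomputable def cantorCHomeomorphNatToBool : cantorC ≃ₜ (ℕ → Bool) :=
  (Homeomorph.setCongr cantorC_eq_cantorSet).trans cantorSetHomeomorphNatToBool

instance : CompactSpace cantorC := cantorCHomeomorphNatToBool.symm.compactSpace

theorem compact_t2_tfae {X : Type*} [TopologicalSpace X] [CompactSpace X] [T2Space X] :
    List.TFAE [TopologicalSpace.MetrizableSpace X,
      SecondCountableTopology X,
      Nonempty X → ∃ f : cantorC → X, Continuous f ∧ Function.Surjective f] := by
  tfae_have 1 → 2 := fun _ ↦ inferInstance
  tfae_have 2 → 1 := fun _ ↦ inferInstance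
  tfae_have 2 → 3 := fun _ _ ↦ by
    let := metrizableSpaceMetric X
    obtain ⟨f, hf, hsurj⟩ := exists_nat_bool_continuous_surjective_of_compact X
    exact ⟨f ∘ cantorCHomeomorphNatToBool, hf.comp cantorCHomeomorphNatToBool.continuous,
      hsurj.comp cantorCHomeomorphNatToBool.surjective⟩
  tfae_have 3 → 2 := fun h ↦ by
    rcases isEmpty_or_nonempty X with hX | hX
    · have : DiscreteTopology X := Subsingleton.discreteTopology
      exact DiscreteTopology.secondCountableTopology_of_countable
    · obtain ⟨f, hf, hsurj⟩ := h hX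
      exact hf.isProperMap.secondCountableTopology hsurj
  tfae_finish
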